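/- For any number of users K ≥ 2 and any choice of normalized cross-delays l'_{ij}, the independence rate of the interference graphs is at most K/2; that is, limsup_{T→∞} α(G_{K,T})/T ≤ K/2. -/

import Mathlib

/-- The time-indexed interference graph `G_{K,T}` of the `K`-user LOS interference
channel with normalized cross-delays `l i j` (representing `l'_{ij}` for `i ≠ j`). -/
def interferenceGraph (K T : ℕ) (l : Fin K → Fin K → ℤ) :
    SimpleGraph (Fin K × Fin T) where
  Adj a b := a.1 ≠ b.1 ∧
    (((b.2 : ℕ) : ℤ) = ((a.2 : ℕ) : ℤ) + l b.1 a.1 ∨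
     ((a.2 : ℕ) : ℤ) = ((b.2 : ℕ) : ℤ) + l a.1 b.1)
  symm := by
    refine ⟨?_⟩
    rintro a b ⟨h1, h2⟩
    exact ⟨h1.symm, h2.symm⟩
  loopless := by
    refine ⟨?_⟩
    rintro a ⟨h, -⟩
    exact h rfl

/-- The independence number of a graph on a finite vertex type: the maximum size of
a set of vertices no two of which are adjacent. -/
noncomputable def indepNum {V : Type*} [Fintype V] (G : SimpleGraph V) : ℕ :=
  sSup {n : ℕ | ∃ s : Finset V, (∀ u ∈ s, ∀ v ∈ s, ¬ G.Adj u v) ∧ s.card = n}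


/-!
If `s` is independent and `j ≠ i`, then the times at which user `i` is active,
shifted by `l j i`, avoid the times at which user `j` is active; both lie in a window of
length `T + |l j i|`, so the two users together occupy at most `T + |l j i|` vertices of `s`.
Summing this over the `K` consecutive pairs `(i, i + 1)` of the cycle `finRotate K` counts
every user twice, whence `2 α(G_{K,T}) ≤ K T + c` with `c` independent of `T`.
-/

open Finset Filter

lemma card_add_card_le_of_disjoint_map_addRight {A B : Finset ℤ} {T : ℕ} {L : ℤ}
    (hA : A ⊆ Ico 0 (T : ℤ)) (hB : B ⊆ Ico 0 (T : ℤ))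
    (hAB : Disjoint (A.map (addRightEmbedding L)) B) :
    #A + #B ≤ T + L.natAbs := by
  have hsub : A.map (addRightEmbedding L) ∪ B ⊆ Ico (min 0 L) (T + max 0 L) := by
    refine union_subset ?_ (hB.trans (Ico_subset_Ico (min_le_left _ _) ?_))
    · refine (map_subset_map.2 hA).trans ?_
      rw [map_add_right_Ico]
      exact Ico_subset_Ico (by simp) (by omega)
    · omega
  calc #A + #B = #(A.map (addRightEmbedding L) ∪ B) := by
        rw [card_union_of_disjoint hAB, card_map]
    _ ≤ #(Ico (min 0 L) (T + max 0 L)) := card_le_card hsub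
    _ = T + L.natAbs := by rw [Int.card_Ico]; omega

lemma two_nsmul_sum_le_of_add_comp_perm_le {ι M : Type*} [Fintype ι] [AddCommMonoid M]
    [PartialOrder M] [IsOrderedAddMonoid M] (σ : Equiv.Perm ι) {f g : ι → M}
    (h : ∀ i, f i + f (σ i) ≤ g i) :
    2 • ∑ i, f i ≤ ∑ i, g i :=
  calc 2 • ∑ i, f i = ∑ i, (f i + f (σ i)) := by
        rw [sum_add_distrib, Equiv.sum_comp, two_nsmul]
    _ ≤ ∑ i, g i := sum_le_sum fun i _ => h i

lemma indepNum_le_of_forall_card_le {V : Type*} [Fintype V] {G : SimpleGraph V} {m : ℕ}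
    (h : ∀ s : Finset V, (∀ u ∈ s, ∀ v ∈ s, ¬ G.Adj u v) → #s ≤ m) :
    indepNum G ≤ m :=
  csSup_le ⟨0, ∅, by simp⟩ fun _ ⟨s, hs, hcard⟩ => hcard ▸ h s hs

lemma limsup_le_of_le_add_div {u : ℕ → ℝ} {a c : ℝ} (hu : ∀ n, 0 ≤ u n)
    (h : ∀ n, 0 < n → u n ≤ a + c / n) :
    limsup u atTop ≤ a := by
  have hlim : Tendsto (fun n : ℕ => a + c / n) atTop (nhds a) := by
    simpa using tendsto_const_nhds.add
      (tendsto_const_nhds.div_atTop (tendsto_natCast_atTop_atTop (R := ℝ)))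
  calc limsup u atTop ≤ limsup (fun n : ℕ => a + c / n) atTop :=
        limsup_le_limsup (eventually_gt_atTop 0 |>.mono h)
          (isBoundedUnder_of ⟨0, hu⟩).isCoboundedUnder_le hlim.isBoundedUnder_le
    _ = a := hlim.limsup_eq

namespace interferenceGraph

variable {K T : ℕ} {l : Fin K → Fin K → ℤ} {s : Finset (Fin K × Fin T)}

def activeTimes (s : Finset (Fin K × Fin T)) (i : Fin K) : Finset ℤ :=
  {v ∈ s | v.1 = i}.image fun v => ((v.2 : ℕ) : ℤ)

lemma card_activeTimes (i : Fin K) : #(activeTimes s i) = #{v ∈ s | v.1 = i} := by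
  refine card_image_of_injOn fun u hu v hv huv => ?_
  simp only [coe_filter, Set.mem_ofPred_eq] at hu hv
  exact Prod.ext (hu.2.trans hv.2.symm) (Fin.ext (by simpa using huv))

lemma activeTimes_subset_Ico (i : Fin K) : activeTimes s i ⊆ Ico 0 (T : ℤ) := by
  intro x hx
  obtain ⟨v, -, rfl⟩ := mem_image.1 hx
  simp

lemma disjoint_activeTimes (hs : ∀ u ∈ s, ∀ v ∈ s, ¬ (interferenceGraph K T l).Adj u v)
    {i j : Fin K} (hij : i ≠ j) :
    Disjoint ((activeTimes s i).map (addRightEmbedding (l j i))) (activeTimes s j) := by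
  refine disjoint_left.2 fun x hxi hxj => ?_
  simp only [activeTimes, Finset.mem_map, mem_image, mem_filter, addRightEmbedding_apply]
    at hxi hxj
  obtain ⟨-, ⟨u, ⟨hu, rfl⟩, rfl⟩, rfl⟩ := hxi
  obtain ⟨v, ⟨hv, rfl⟩, hvu⟩ := hxj
  exact hs u hu v hv ⟨hij, Or.inl (by simpa using hvu)⟩

lemma card_filter_add_card_filter_le
    (hs : ∀ u ∈ s, ∀ v ∈ s, ¬ (interferenceGraph K T l).Adj u v) {i j : Fin K} (hij : i ≠ j) :
    #{v ∈ s | v.1 = i} + #{v ∈ s | v.1 = j} ≤ T + (l j i).natAbs := by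
  rw [← card_activeTimes, ← card_activeTimes]
  exact card_add_card_le_of_disjoint_map_addRight (activeTimes_subset_Ico i)
    (activeTimes_subset_Ico j) (disjoint_activeTimes hs hij)

lemma two_mul_card_le (hK : 2 ≤ K)
    (hs : ∀ u ∈ s, ∀ v ∈ s, ¬ (interferenceGraph K T l).Adj u v) :
    2 * #s ≤ K * T + ∑ i, (l (finRotate K i) i).natAbs := by
  have hrot (i : Fin K) : i ≠ finRotate K i := by
    refine (Equiv.Perm.mem_support.1 ?_).symm
    rw [support_finRotate_of_le hK]
    exact mem_univ i
  calc 2 * #s = 2 • ∑ i, #{v ∈ s | v.1 = i} := by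
        rw [card_eq_sum_card_fiberwise fun v _ => mem_univ v.1, smul_eq_mul]
    _ ≤ ∑ i, (T + (l (finRotate K i) i).natAbs) :=
        two_nsmul_sum_le_of_add_comp_perm_le (finRotate K) fun i =>
          card_filter_add_card_filter_le hs (hrot i)
    _ = K * T + ∑ i, (l (finRotate K i) i).natAbs := by simp [sum_add_distrib]

lemma two_mul_indepNum_le (hK : 2 ≤ K) :
    2 * indepNum (interferenceGraph K T l) ≤ K * T + ∑ i, (l (finRotate K i) i).natAbs := by
  have hle : indepNum (interferenceGraph K T l)
      ≤ (K * T + ∑ i, (l (finRotate K i) i).natAbs) / 2 :=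
    indepNum_le_of_forall_card_le fun s hs => by
      have hs2 := two_mul_card_le hK hs
      omega
  omega

end interferenceGraph

/-- For any number of users `K ≥ 2` and any normalized cross-delays, the independence
rate of the interference graphs is at most `K/2`:
`limsup_{T→∞} α(G_{K,T})/T ≤ K/2`. -/
theorem independence_rate_le (K : ℕ) (hK : 2 ≤ K) (l : Fin K → Fin K → ℤ) :
    Filter.limsup
        (fun T : ℕ => (indepNum (interferenceGraph K T l) : ℝ) / T)
        Filter.atTop
      ≤ K / 2 := by
  set c : ℕ := ∑ i, (l (finRotate K i) i).natAbs
  refine limsup_le_of_le_add_div (c := c / 2) (fun T => by positivity) fun T hT => ?_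
  have hT' : (0 : ℝ) < T := Nat.cast_pos.2 hT
  have hα : 2 * (indepNum (interferenceGraph K T l) : ℝ) ≤ K * T + c := by
    exact_mod_cast interferenceGraph.two_mul_indepNum_le hK
  rw [div_le_iff₀ hT', add_mul, div_mul_cancel₀ _ hT'.ne']
  linarith
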